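/- Let (Ω, μ) be a measure space, q ≥ 2 a real number, N a natural number, w : Ω → [0, ∞) measurable, V : Ω → ℝ² measurable, and G₁, …, G_N : Ω → ℝ² measurable. Set X_j(x) = ⟨V(x), G_j(x)⟩, Y_j(x) = ⟨I V(x), G_j(x)⟩, and interpret ‖V(x)‖^{q−4} as 0 whenever V(x) = 0. Assume that the function h₂(x) := w(x) · ( (q − 2) ‖V(x)‖^{q−4} Σ_j X_j(x)² + ‖V(x)‖^{q−2} Σ_j ‖G_j(x)‖² ) is integrable. Then h₁(x) := w(x) · (q − 2) ‖V(x)‖^{q−4} Σ_j X_j(x) Y_j(x) is integrable and |∫_Ω h₁ dμ| ≤ c_q ∫_Ω h₂ dμ. (This is the weighted integral key inequality with weight w = |∇U|^{p−2}.) -/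

import Mathlib

open scoped RealInnerProductSpace
open MeasureTheory

attribute [local instance] Classical.propDecidable

/-- The rotation by π/2 on ℝ², the real 2×2 realization of the imaginary unit. -/
noncomputable def rotI (v : EuclideanSpace ℝ (Fin 2)) : EuclideanSpace ℝ (Fin 2) :=
  (WithLp.equiv 2 (Fin 2 → ℝ)).symm ![-(v 1), v 0]

/-! With `X = ⟪V, G_j⟫` and `Y = ⟪I V, G_j⟫` one has `X² + Y² = ‖V‖² ‖G_j‖²`, so the weighted
AM-GM inequality `2 √(q - 1) |X Y| ≤ (q - 1) X² + Y²` gives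
`(q - 2) |X Y| ≤ c_q ((q - 2) X² + ‖V‖² ‖G_j‖²)`. Summing over `j` and multiplying by
`w ‖V‖^(q-4)` bounds `|h₁|` by `c_q h₂` pointwise; integrating this bound gives both claims. -/

theorem continuous_rotI : Continuous rotI := by
  unfold rotI
  simp only [WithLp.equiv_symm_apply]
  fun_prop

theorem inner_sq_add_inner_rotI_sq (v g : EuclideanSpace ℝ (Fin 2)) :
    ⟪v, g⟫ ^ 2 + ⟪rotI v, g⟫ ^ 2 = ‖v‖ ^ 2 * ‖g‖ ^ 2 := by
  simp only [← real_inner_self_eq_norm_sq, PiLp.inner_apply, Fin.sum_univ_two, rotI,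
    RCLike.inner_apply, conj_trivial, WithLp.equiv_symm_apply, Matrix.cons_val_zero,
    Matrix.cons_val_one, Matrix.cons_val_fin_one]
  ring

theorem two_mul_sqrt_mul_abs_mul_le {a : ℝ} (ha : 0 ≤ a) (x y : ℝ) :
    2 * √a * |x * y| ≤ a * x ^ 2 + y ^ 2 := by
  have h := two_mul_le_add_sq (√a * |x|) |y|
  rwa [mul_pow, Real.sq_sqrt ha, sq_abs, sq_abs, mul_assoc, mul_assoc, ← abs_mul, ← mul_assoc]
    at h

theorem sub_two_mul_abs_mul_le {q : ℝ} (hq : 2 ≤ q) (x y : ℝ) :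
    (q - 2) * |x * y| ≤ (q - 2) / (2 * √(q - 1)) * ((q - 1) * x ^ 2 + y ^ 2) := by
  have hs : 0 < √(q - 1) := Real.sqrt_pos.2 (by linarith)
  rw [div_mul_eq_mul_div, le_div_iff₀ (by positivity)]
  calc (q - 2) * |x * y| * (2 * √(q - 1)) = (q - 2) * (2 * √(q - 1) * |x * y|) := by ring
    _ ≤ (q - 2) * ((q - 1) * x ^ 2 + y ^ 2) :=
      mul_le_mul_of_nonneg_left (two_mul_sqrt_mul_abs_mul_le (by linarith) x y) (by linarith)

theorem sub_two_mul_abs_sum_inner_mul_inner_rotI_le {ι : Type*} [Fintype ι] {q : ℝ} (hq : 2 ≤ q)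
    (v : EuclideanSpace ℝ (Fin 2)) (g : ι → EuclideanSpace ℝ (Fin 2)) :
    (q - 2) * |∑ j, ⟪v, g j⟫ * ⟪rotI v, g j⟫| ≤
      (q - 2) / (2 * √(q - 1)) * ((q - 2) * ∑ j, ⟪v, g j⟫ ^ 2 + ‖v‖ ^ 2 * ∑ j, ‖g j‖ ^ 2) := by
  calc (q - 2) * |∑ j, ⟪v, g j⟫ * ⟪rotI v, g j⟫|
      ≤ ∑ j, (q - 2) * |⟪v, g j⟫ * ⟪rotI v, g j⟫| := by
        rw [← Finset.mul_sum]
        exact mul_le_mul_of_nonneg_left (Finset.abs_sum_le_sum_abs _ _) (by linarith)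
    _ ≤ ∑ j, (q - 2) / (2 * √(q - 1)) * ((q - 1) * ⟪v, g j⟫ ^ 2 + ⟪rotI v, g j⟫ ^ 2) :=
        Finset.sum_le_sum fun j _ => sub_two_mul_abs_mul_le hq _ _
    _ = (q - 2) / (2 * √(q - 1)) * ((q - 2) * ∑ j, ⟪v, g j⟫ ^ 2 + ‖v‖ ^ 2 * ∑ j, ‖g j‖ ^ 2) := by
        simp only [Finset.mul_sum, ← Finset.sum_add_distrib]
        refine Finset.sum_congr rfl fun j _ => ?_
        linear_combination (q - 2) / (2 * √(q - 1)) * inner_sq_add_inner_rotI_sq v (g j)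

theorem ite_rpow_sub_two_mul_sq_le {E : Type*} [NormedAddCommGroup E] [DecidableEq E]
    (v : E) (r : ℝ) :
    (if v = 0 then 0 else ‖v‖ ^ (r - 2)) * ‖v‖ ^ 2 ≤ ‖v‖ ^ r := by
  split_ifs with hv
  · simpa using Real.rpow_nonneg (norm_nonneg v) r
  · rw [← Real.rpow_add_natCast (norm_ne_zero_iff.2 hv)]
    norm_num

theorem abs_weighted_sum_inner_mul_inner_rotI_le {ι : Type*} [Fintype ι] {q : ℝ} (hq : 2 ≤ q)
    {w : ℝ} (hw : 0 ≤ w) (v : EuclideanSpace ℝ (Fin 2)) (g : ι → EuclideanSpace ℝ (Fin 2)) :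
    |w * ((q - 2) * (if v = 0 then 0 else ‖v‖ ^ (q - 4)) * ∑ j, ⟪v, g j⟫ * ⟪rotI v, g j⟫)| ≤
      (q - 2) / (2 * √(q - 1)) * (w * ((q - 2) * (if v = 0 then 0 else ‖v‖ ^ (q - 4)) *
        (∑ j, ⟪v, g j⟫ ^ 2) + ‖v‖ ^ (q - 2) * ∑ j, ‖g j‖ ^ 2)) := by
  have hAv : (if v = 0 then 0 else ‖v‖ ^ (q - 4)) * ‖v‖ ^ 2 ≤ ‖v‖ ^ (q - 2) := by
    have h := ite_rpow_sub_two_mul_sq_le v (q - 2)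
    rw [show q - 2 - 2 = q - 4 by ring] at h
    exact h
  have hA : 0 ≤ if v = 0 then 0 else ‖v‖ ^ (q - 4) := by positivity
  have hc : 0 ≤ (q - 2) / (2 * √(q - 1)) := div_nonneg (by linarith) (by positivity)
  have hG : 0 ≤ ∑ j, ‖g j‖ ^ 2 := Finset.sum_nonneg fun j _ => sq_nonneg _
  have hS := sub_two_mul_abs_sum_inner_mul_inner_rotI_le hq v g
  generalize (if v = 0 then 0 else ‖v‖ ^ (q - 4)) = A at hA hAv ⊢
  generalize (q - 2) / (2 * √(q - 1)) = c at hc hS ⊢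
  generalize ∑ j, ⟪v, g j⟫ * ⟪rotI v, g j⟫ = S₁ at hS ⊢
  generalize ∑ j, ⟪v, g j⟫ ^ 2 = S₂ at hS ⊢
  generalize ∑ j, ‖g j‖ ^ 2 = S₃ at hG hS ⊢
  calc |w * ((q - 2) * A * S₁)| = w * A * ((q - 2) * |S₁|) := by
        rw [abs_mul, abs_mul, abs_of_nonneg hw, abs_of_nonneg (mul_nonneg (by linarith) hA)]
        ring
    _ ≤ w * A * (c * ((q - 2) * S₂ + ‖v‖ ^ 2 * S₃)) := by gcongr
    _ = c * w * ((q - 2) * A * S₂ + A * ‖v‖ ^ 2 * S₃) := by ring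
    _ ≤ c * w * ((q - 2) * A * S₂ + ‖v‖ ^ (q - 2) * S₃) := by gcongr
    _ = c * (w * ((q - 2) * A * S₂ + ‖v‖ ^ (q - 2) * S₃)) := by ring

theorem stmt4 {Ω : Type*} [MeasurableSpace Ω] (μ : Measure Ω)
    (q : ℝ) (hq : 2 ≤ q) (N : ℕ)
    (w : Ω → ℝ) (hw0 : ∀ x, 0 ≤ w x) (hw : Measurable w)
    (V : Ω → EuclideanSpace ℝ (Fin 2)) (hV : Measurable V)
    (G : Fin N → Ω → EuclideanSpace ℝ (Fin 2)) (hG : ∀ j, Measurable (G j))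
    (h₁ h₂ : Ω → ℝ)
    (hh₁ : h₁ = fun x => w x * ((q - 2) * (if V x = 0 then 0 else ‖V x‖ ^ (q - 4)) *
        ∑ j, ⟪V x, G j x⟫ * ⟪rotI (V x), G j x⟫))
    (hh₂ : h₂ = fun x => w x *
        ((q - 2) * (if V x = 0 then 0 else ‖V x‖ ^ (q - 4)) * (∑ j, ⟪V x, G j x⟫ ^ 2) +
          ‖V x‖ ^ (q - 2) * ∑ j, ‖G j x‖ ^ 2))
    (hint : Integrable h₂ μ) :
    Integrable h₁ μ ∧
      |∫ x, h₁ x ∂μ| ≤ (q - 2) / (2 * Real.sqrt (q - 1)) * ∫ x, h₂ x ∂μ := by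
  have hpt : ∀ x, ‖h₁ x‖ ≤ (q - 2) / (2 * √(q - 1)) * h₂ x := fun x => by
    simpa only [hh₁, hh₂, Real.norm_eq_abs] using
      abs_weighted_sum_inner_mul_inner_rotI_le hq (hw0 x) (V x) (fun j => G j x)
  have h₁meas : Measurable h₁ := by
    rw [hh₁]
    refine hw.mul ((measurable_const.mul ?_).mul (Finset.measurable_sum _ fun j _ => ?_))
    · exact Measurable.ite (hV (measurableSet_singleton 0)) measurable_const
        (hV.norm.pow_const _)
    · exact (hV.inner (hG j)).mul ((continuous_rotI.measurable.comp hV).inner (hG j))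
  have h₁int : Integrable h₁ μ :=
    (hint.const_mul _).mono' h₁meas.aestronglyMeasurable (.of_forall hpt)
  refine ⟨h₁int, ?_⟩
  rw [← integral_const_mul, ← Real.norm_eq_abs]
  exact norm_integral_le_of_norm_le (hint.const_mul _) (.of_forall hpt)
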